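/- arXiv:2012.05237 — 3 statements merged into one kernel-verified Lean document; each statement's English description precedes it below -/
import Mathlib

section
/- Let T > 0, let N ≥ 1 be an integer, and let a ∈ ℝ, q ≥ 0, ε ∈ ℝ with ε ≥ q², and c ≥ 0. Then there exists a unique continuously differentiable function η : [0,T] → ℝ satisfying the open-loop Riccati equation η'(t) = 2(a + q − q/N)·η(t) + (1 − 1/N)·η(t)² + q² − ε for all t ∈ [0,T], with terminal condition η(T) = c. Moreover, this solution satisfies η(t) ≥ 0 for all t ∈ [0,T]. -/
/-!
Uniqueness holds for every Riccati equation: its right-hand side is locally Lipschitz, and two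
solutions on the compact interval `[0, T]` stay in a compact set, where Gronwall applies.

For existence (with `B = 1 - 1/N ≥ 0`, `C = q² - ε ≤ 0`, `c ≥ 0`) the solution is explicit. If
`B > 0` and the discriminant is positive, `Bx² + Ax + C` has roots `m < p` with `m ≤ 0 ≤ p`, and
`(η - p) / (η - m) = ((c - p) / (c - m)) · exp (B (p - m) (t - T))` can be solved for `η`; going
backward from `T` the exponential stays in `(0, 1]`, so the denominator stays positive and `η`
neither blows up nor becomes negative. The degenerate cases (double root `A = C = 0`, and `B = 0`)
are solved directly.
-/

open Set Real

def SolvesRiccati (A B C T c : ℝ) (η : ℝ → ℝ) : Prop :=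
  (∀ t ∈ Set.Icc (0 : ℝ) T,
      HasDerivWithinAt η (A * η t + B * (η t) ^ 2 + C) (Set.Icc (0 : ℝ) T) t) ∧
    η T = c

theorem ODE_solution_unique_of_mem_Icc_left_of_locallyLipschitz {E : Type*}
    [NormedAddCommGroup E] [NormedSpace ℝ E] {v : E → E} (hv : LocallyLipschitz v)
    {f g : ℝ → E} {a b : ℝ}
    (hf : ∀ t ∈ Icc a b, HasDerivWithinAt f (v (f t)) (Icc a b) t)
    (hg : ∀ t ∈ Icc a b, HasDerivWithinAt g (v (g t)) (Icc a b) t)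
    (hb : f b = g b) : EqOn f g (Icc a b) := by
  have hfc : ContinuousOn f (Icc a b) := fun t ht => (hf t ht).continuousWithinAt
  have hgc : ContinuousOn g (Icc a b) := fun t ht => (hg t ht).continuousWithinAt
  obtain ⟨K, hK⟩ := hv.locallyLipschitzOn.exists_lipschitzOnWith_of_compact
    ((isCompact_Icc.image_of_continuousOn hfc).union (isCompact_Icc.image_of_continuousOn hgc))
  exact ODE_solution_unique_of_mem_Icc_left (v := fun _ => v) (fun _ _ => hK)
    hfc (fun t ht => (hf t (Ioc_subset_Icc_self ht)).mono_of_mem_nhdsWithin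
      (Icc_mem_nhdsLE_of_mem ht))
    (fun t ht => Or.inl (mem_image_of_mem f (Ioc_subset_Icc_self ht)))
    hgc (fun t ht => (hg t (Ioc_subset_Icc_self ht)).mono_of_mem_nhdsWithin
      (Icc_mem_nhdsLE_of_mem ht))
    (fun t ht => Or.inr (mem_image_of_mem g (Ioc_subset_Icc_self ht))) hb

theorem SolvesRiccati.eqOn {A B C T c : ℝ} {η₁ η₂ : ℝ → ℝ} (h₁ : SolvesRiccati A B C T c η₁)
    (h₂ : SolvesRiccati A B C T c η₂) : EqOn η₁ η₂ (Icc 0 T) :=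
  ODE_solution_unique_of_mem_Icc_left_of_locallyLipschitz (v := fun x => A * x + B * x ^ 2 + C)
    (ContDiff.locallyLipschitz (𝕂 := ℝ) (by fun_prop)) h₁.1 h₂.1 (h₁.2.trans h₂.2.symm)

theorem SolvesRiccati.of_hasDerivAt {A B C T c : ℝ} {η : ℝ → ℝ}
    (hη : ∀ t ≤ T, HasDerivAt η (A * η t + B * η t ^ 2 + C) t) (hT : η T = c) :
    SolvesRiccati A B C T c η :=
  ⟨fun t ht => (hη t ht.2).hasDerivWithinAt, hT⟩

theorem hasDerivAt_exp_mul_sub (l T t : ℝ) :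
    HasDerivAt (fun s => exp (l * (s - T))) (l * exp (l * (t - T))) t := by
  simpa [mul_comm] using (((hasDerivAt_id t).sub_const T).const_mul l).exp

theorem exists_solvesRiccati_nonneg_of_roots {B p m T c : ℝ} (hB : 0 < B) (hmp : m < p)
    (hp : 0 ≤ p) (hmc : m ≤ c) (hc : 0 ≤ c) :
    ∃ η, SolvesRiccati (-B * (p + m)) B (B * (p * m)) T c η ∧ ∀ t ∈ Icc 0 T, 0 ≤ η t := by
  set l := B * (p - m)
  set E : ℝ → ℝ := fun t => exp (l * (t - T))
  have hE : ∀ t ≤ T, 0 < E t ∧ E t ≤ 1 := fun t ht =>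
    ⟨exp_pos _, exp_le_one_iff.mpr (mul_nonpos_of_nonneg_of_nonpos
      (mul_pos hB (sub_pos.mpr hmp)).le (sub_nonpos.mpr ht))⟩
  have hden : ∀ t ≤ T, 0 < (c - m) - (c - p) * E t := fun t ht => by
    obtain ⟨hE0, hE1⟩ := hE t ht
    calc 0 < (c - m) * (1 - E t) + (p - m) * E t := add_pos_of_nonneg_of_pos
            (mul_nonneg (sub_nonneg.mpr hmc) (sub_nonneg.mpr hE1)) (mul_pos (sub_pos.mpr hmp) hE0)
      _ = _ := by ring
  have hnum : ∀ t ≤ T, 0 ≤ p * (c - m) - m * (c - p) * E t := fun t ht => by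
    obtain ⟨hE0, hE1⟩ := hE t ht
    calc 0 ≤ p * (c - m) * (1 - E t) + c * (p - m) * E t := add_nonneg
            (mul_nonneg (mul_nonneg hp (sub_nonneg.mpr hmc)) (sub_nonneg.mpr hE1))
            (mul_nonneg (mul_nonneg hc (sub_pos.mpr hmp).le) hE0.le)
      _ = _ := by ring
  refine ⟨fun t => (p * (c - m) - m * (c - p) * E t) / ((c - m) - (c - p) * E t),
    .of_hasDerivAt (fun t ht => ?_) ?_, fun t ht => div_nonneg (hnum t ht.2) (hden t ht.2).le⟩
  · have hE' : HasDerivAt E (l * E t) t := hasDerivAt_exp_mul_sub l T t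
    refine (((hE'.const_mul (m * (c - p))).const_sub (p * (c - m))).div
      ((hE'.const_mul (c - p)).const_sub (c - m)) (hden t ht).ne').congr_deriv ?_
    field_simp [(hden t ht).ne']
    ring
  · simp only [E, sub_self, mul_zero, exp_zero, mul_one]
    rw [show p * (c - m) - m * (c - p) = c * (p - m) by ring, show c - m - (c - p) = p - m by ring,
      mul_div_cancel_right₀ c (sub_pos.mpr hmp).ne']

theorem exists_solvesRiccati_nonneg_of_sq {B T c : ℝ} (hB : 0 ≤ B) (hc : 0 ≤ c) :
    ∃ η, SolvesRiccati 0 B 0 T c η ∧ ∀ t ∈ Icc 0 T, 0 ≤ η t := by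
  have hden : ∀ t ≤ T, 0 < 1 + B * c * (T - t) := fun t ht => by
    have := mul_nonneg (mul_nonneg hB hc) (sub_nonneg.mpr ht)
    linarith
  refine ⟨fun t => c / (1 + B * c * (T - t)), .of_hasDerivAt (fun t ht => ?_) (by simp),
    fun t ht => div_nonneg hc (hden t ht.2).le⟩
  refine ((hasDerivAt_const t c).div ((((hasDerivAt_id' t).const_sub T).const_mul
    (B * c)).const_add 1) (hden t ht).ne').congr_deriv ?_
  field_simp [(hden t ht).ne']
  ring

theorem exists_solvesRiccati_nonneg_linear {A C T c : ℝ} (hA : A ≠ 0) (hC : C ≤ 0)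
    (hc : 0 ≤ c) : ∃ η, SolvesRiccati A 0 C T c η ∧ ∀ t ∈ Icc 0 T, 0 ≤ η t := by
  set p := -C / A
  have hAp : A * p = -C := mul_div_cancel₀ _ hA
  refine ⟨fun t => p + (c - p) * exp (A * (t - T)), .of_hasDerivAt (fun t _ => ?_) (by simp),
    fun t ht => ?_⟩
  · refine (((hasDerivAt_exp_mul_sub A T t).const_mul (c - p)).const_add p).congr_deriv ?_
    linear_combination (-1 : ℝ) * hAp
  · have hE := exp_pos (A * (t - T))
    rcases hA.lt_or_gt with hA | hA
    · have hp : p ≤ 0 := div_nonpos_of_nonneg_of_nonpos (neg_nonneg.mpr hC) hA.le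
      have hE1 : 1 ≤ exp (A * (t - T)) :=
        one_le_exp_iff.mpr (mul_nonneg_of_nonpos_of_nonpos hA.le (sub_nonpos.mpr ht.2))
      calc 0 ≤ c * exp (A * (t - T)) + -p * (exp (A * (t - T)) - 1) := add_nonneg
              (mul_nonneg hc hE.le) (mul_nonneg (neg_nonneg.mpr hp) (sub_nonneg.mpr hE1))
        _ = _ := by ring
    · have hp : 0 ≤ p := div_nonneg (neg_nonneg.mpr hC) hA.le
      have hE1 : exp (A * (t - T)) ≤ 1 :=
        exp_le_one_iff.mpr (mul_nonpos_of_nonneg_of_nonpos hA.le (sub_nonpos.mpr ht.2))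
      calc 0 ≤ p * (1 - exp (A * (t - T))) + c * exp (A * (t - T)) := add_nonneg
              (mul_nonneg hp (sub_nonneg.mpr hE1)) (mul_nonneg hc hE.le)
        _ = _ := by ring

theorem exists_solvesRiccati_nonneg_const {C T c : ℝ} (hC : C ≤ 0) (hc : 0 ≤ c) :
    ∃ η, SolvesRiccati 0 0 C T c η ∧ ∀ t ∈ Icc 0 T, 0 ≤ η t := by
  refine ⟨fun t => c + C * (t - T), .of_hasDerivAt (fun t _ => ?_) (by simp), fun t ht => ?_⟩
  · exact ((((hasDerivAt_id' t).sub_const T).const_mul C).const_add c).congr_deriv (by ring)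
  · have := mul_nonneg_of_nonpos_of_nonpos hC (sub_nonpos.mpr ht.2)
    linarith

theorem exists_solvesRiccati_nonneg (A : ℝ) {B C : ℝ} (T : ℝ) {c : ℝ} (hB : 0 ≤ B) (hC : C ≤ 0)
    (hc : 0 ≤ c) : ∃ η, SolvesRiccati A B C T c η ∧ ∀ t ∈ Icc 0 T, 0 ≤ η t := by
  rcases hB.eq_or_lt with rfl | hB
  · rcases eq_or_ne A 0 with rfl | hA
    · exact exists_solvesRiccati_nonneg_const hC hc
    · exact exists_solvesRiccati_nonneg_linear hA hC hc
  have hD : 0 ≤ A ^ 2 - 4 * B * C := by nlinarith [sq_nonneg A]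
  rcases hD.eq_or_lt with hD | hD
  · obtain ⟨rfl, rfl⟩ : A = 0 ∧ C = 0 := by constructor <;> nlinarith [sq_nonneg A]
    exact exists_solvesRiccati_nonneg_of_sq hB.le hc
  set r := √(A ^ 2 - 4 * B * C)
  have hr : 0 < r := sqrt_pos.mpr hD
  have hr2 : r ^ 2 = A ^ 2 - 4 * B * C := sq_sqrt hD.le
  have hAr := abs_le.mp (abs_le_sqrt (by nlinarith : A ^ 2 ≤ A ^ 2 - 4 * B * C))
  have h2B : 0 < 2 * B := by positivity
  have hsol := exists_solvesRiccati_nonneg_of_roots (T := T) hB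
    (div_lt_div_of_pos_right (by linarith) h2B : (-A - r) / (2 * B) < (-A + r) / (2 * B))
    (div_nonneg (by linarith) h2B.le)
    ((div_nonpos_of_nonpos_of_nonneg (by linarith) h2B.le).trans hc) hc
  rwa [show -B * ((-A + r) / (2 * B) + (-A - r) / (2 * B)) = A by field_simp; ring,
    show B * ((-A + r) / (2 * B) * ((-A - r) / (2 * B))) = C by
      field_simp; linear_combination (-1 : ℝ) * hr2] at hsol

theorem openLoop_riccati_existence_uniqueness_nonneg_general
    (T : ℝ) (N : ℕ) (a q ε c : ℝ)
    (hε : q ^ 2 ≤ ε) (hc : 0 ≤ c) :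
    ∃ η : ℝ → ℝ,
      SolvesRiccati (2 * (a + q - q / (N : ℝ))) (1 - 1 / (N : ℝ)) (q ^ 2 - ε) T c η ∧
      (∀ t ∈ Set.Icc (0 : ℝ) T, 0 ≤ η t) ∧
      (∀ η' : ℝ → ℝ,
        SolvesRiccati (2 * (a + q - q / (N : ℝ))) (1 - 1 / (N : ℝ)) (q ^ 2 - ε) T c η' →
        ∀ t ∈ Set.Icc (0 : ℝ) T, η' t = η t) := by
  obtain ⟨η, hη, hη_nonneg⟩ := exists_solvesRiccati_nonneg (2 * (a + q - q / (N : ℝ))) T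
    (Nat.one_sub_one_div_cast_nonneg N) (sub_nonpos.mpr hε) hc
  exact ⟨η, hη, hη_nonneg, fun η' hη' _ ht => hη'.eqOn hη ht⟩

/-- Existence, uniqueness and nonnegativity of the solution of the open-loop
Riccati equation `η'(t) = 2(a + q − q/N)·η(t) + (1 − 1/N)·η(t)² + q² − ε`,
`η(T) = c`, in the Carmona–Fouque–Sun systemic-risk model, under `ε ≥ q²`. -/
theorem openLoop_riccati_existence_uniqueness_nonneg
    (T : ℝ) (hT : 0 < T) (N : ℕ) (hN : 1 ≤ N) (a q ε c : ℝ)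
    (hq : 0 ≤ q) (hε : q ^ 2 ≤ ε) (hc : 0 ≤ c) :
    ∃ η : ℝ → ℝ,
      SolvesRiccati (2 * (a + q - q / (N : ℝ))) (1 - 1 / (N : ℝ)) (q ^ 2 - ε) T c η ∧
      (∀ t ∈ Set.Icc (0 : ℝ) T, 0 ≤ η t) ∧
      (∀ η' : ℝ → ℝ,
        SolvesRiccati (2 * (a + q - q / (N : ℝ))) (1 - 1 / (N : ℝ)) (q ^ 2 - ε) T c η' →
        ∀ t ∈ Set.Icc (0 : ℝ) T, η' t = η t) :=
  openLoop_riccati_existence_uniqueness_nonneg_general T N a q ε c hε hc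
end

section
/- Let T > 0 and a ∈ ℝ, q ≥ 0, ε ≥ q², c ≥ 0. For each integer N ≥ 1, let η^{OL,N} be the unique solution on [0,T] of η'(t) = 2(a + q − q/N)η(t) + (1 − 1/N)η(t)² + q² − ε with η(T) = c, and let η^{CL,N} be the unique solution of η'(t) = 2(a + q)η(t) + (1 − 1/N²)η(t)² + q² − ε with η(T) = c. Then there exists a unique solution η^∞ on [0,T] of the limiting Riccati equation η'(t) = 2(a + q)η(t) + η(t)² + q² − ε with η(T) = c, and both sup_{t ∈ [0,T]} |η^{OL,N}(t) − η^∞(t)| → 0 and sup_{t ∈ [0,T]} |η^{CL,N}(t) − η^∞(t)| → 0 as N → ∞. In particular sup_{t ∈ [0,T]} |η^{OL,N}(t) − η^{CL,N}(t)| → 0 as N → ∞. -/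
open Set Filter Real

/-!
Reversing time turns each Riccati equation into an initial value problem for
`x' = -(A x + B x² + C)`. Since `C ≤ 0` and `c ≥ 0`, the solutions cannot become negative, and
as long as `B ≥ 1/2` they cannot exceed an explicit level `K` that does not depend on `N`. On
`[0, K]` the limiting vector field is Lipschitz, while the open- and closed-loop fields differ
from it by `O(1/N)`; Grönwall's inequality for approximate trajectories then bounds the
sup-distance between the solutions by `O(1/N)` (and by `0` for two limiting solutions, which is
uniqueness). The limiting solution itself comes from the Picard–Lindelöf theorem applied to the
field with the state clamped to `[0, K]`, a clamping which the solution never feels.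
-/

theorem image_nonpos_of_deriv_right_le_mul {g g' : ℝ → ℝ} {a b L : ℝ}
    (hg : ContinuousOn g (Icc a b)) (hg' : ∀ s ∈ Ico a b, HasDerivWithinAt g (g' s) (Ici s) s)
    (ha : g a ≤ 0) (hbound : ∀ s ∈ Ico a b, 0 < g s → g' s ≤ L * g s) :
    ∀ s ∈ Icc a b, g s ≤ 0 := by
  intro s hs
  -- `g` cannot cross the barrier `δ e^{(L+1)(s-a)}`, which grows strictly faster than `g` can.
  have hbarrier : ∀ δ > 0, g s ≤ δ * exp ((L + 1) * (s - a)) := by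
    intro δ hδ
    refine image_le_of_deriv_right_lt_deriv_boundary hg hg'
      (B := fun x => δ * exp ((L + 1) * (x - a)))
      (B' := fun x => (L + 1) * (δ * exp ((L + 1) * (x - a)))) (by simpa using ha.trans hδ.le)
      (fun x => ?_) (fun x hx hgx => ?_) hs
    · refine ((((hasDerivAt_id x).sub_const a).const_mul (L + 1)).exp.const_mul δ).congr_deriv ?_
      simp only [id]
      ring
    · have hpos : 0 < δ * exp ((L + 1) * (x - a)) := by positivity
      calc g' x ≤ L * g x := hbound x hx (hgx ▸ hpos)
        _ < (L + 1) * g x := by linarith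
        _ = _ := by rw [hgx]
  by_contra! hpos
  have hexp := exp_pos ((L + 1) * (s - a))
  have := hbarrier (g s / (2 * exp ((L + 1) * (s - a)))) (by positivity)
  rw [div_mul_eq_mul_div, mul_div_mul_right _ _ hexp.ne'] at this
  linarith

theorem mapsTo_const_sub_Icc (T : ℝ) : MapsTo (T - ·) (Icc 0 T) (Icc 0 T) :=
  fun s hs => ⟨by linarith [hs.2], by linarith [hs.1]⟩

theorem HasDerivWithinAt.comp_const_sub_Icc {f : ℝ → ℝ} {f' T t : ℝ}
    (hf : HasDerivWithinAt f f' (Icc 0 T) (T - t)) :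
    HasDerivWithinAt (fun s => f (T - s)) (-f') (Icc 0 T) t := by
  have := hf.comp t ((hasDerivAt_id t).const_sub T).hasDerivWithinAt (mapsTo_const_sub_Icc T)
  simpa [Function.comp_def] using this

theorem image_nonpos_of_neg_mul_le_deriv {g g' : ℝ → ℝ} {T L : ℝ}
    (hg : ∀ t ∈ Icc 0 T, HasDerivWithinAt g (g' t) (Icc 0 T) t) (hT : g T ≤ 0)
    (hbound : ∀ t ∈ Ioc 0 T, 0 < g t → -(L * g t) ≤ g' t) :
    ∀ t ∈ Icc 0 T, g t ≤ 0 := by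
  have hrev : ∀ s ∈ Icc 0 T, HasDerivWithinAt (fun u => g (T - u)) (-g' (T - s)) (Icc 0 T) s :=
    fun s hs => (hg _ (mapsTo_const_sub_Icc T hs)).comp_const_sub_Icc
  have key := image_nonpos_of_deriv_right_le_mul (L := L)
    (fun s hs => (hrev s hs).continuousWithinAt)
    (fun s hs => (hrev s (Ico_subset_Icc_self hs)).mono_of_mem_nhdsWithin
      (Icc_mem_nhdsGE_of_mem hs))
    (by simpa using hT)
    (fun s hs hpos => by
      have := hbound (T - s) ⟨by linarith [hs.2], by linarith [hs.1]⟩ hpos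
      linarith)
  intro t ht
  simpa using key (T - t) (mapsTo_const_sub_Icc T ht)

def riccatiField (A B C x : ℝ) : ℝ := A * x + B * x ^ 2 + C

theorem lipschitzOnWith_riccatiField (A B C M : ℝ) :
    LipschitzOnWith (|A| + 2 * |B| * M).toNNReal (riccatiField A B C) (Icc 0 M) := by
  refine LipschitzOnWith.of_dist_le_mul fun x hx y hy => ?_
  have hxy : |x + y| ≤ 2 * M := by
    rw [abs_of_nonneg (by linarith [hx.1, hy.1])]
    linarith [hx.2, hy.2]
  calc dist (riccatiField A B C x) (riccatiField A B C y) = |A + B * (x + y)| * dist x y := by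
        rw [Real.dist_eq, Real.dist_eq, ← abs_mul]
        unfold riccatiField
        ring_nf
    _ ≤ (|A| + |B| * |x + y|) * dist x y := by
        gcongr
        exact (abs_add_le _ _).trans_eq (by rw [abs_mul])
    _ ≤ (|A| + 2 * |B| * M) * dist x y := by
        have := mul_le_mul_of_nonneg_left hxy (abs_nonneg B)
        gcongr ?_ * _
        linarith
    _ ≤ _ := by gcongr; exact le_coe_toNNReal _

theorem abs_riccatiField_sub_le {A B A' B' C M x : ℝ} (hx : x ∈ Icc 0 M) :
    |riccatiField A B C x - riccatiField A' B' C x| ≤ |A - A'| * M + |B - B'| * M ^ 2 := by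
  have hx0 : |x| = x := abs_of_nonneg hx.1
  calc |riccatiField A B C x - riccatiField A' B' C x| = |(A - A') * x + (B - B') * x ^ 2| := by
        unfold riccatiField
        ring_nf
    _ ≤ |A - A'| * x + |B - B'| * x ^ 2 := by
        refine (abs_add_le _ _).trans ?_
        rw [abs_mul, abs_mul, hx0, abs_pow, hx0]
    _ ≤ |A - A'| * M + |B - B'| * M ^ 2 := by
        gcongr <;> linarith [hx.1, hx.2]

theorem riccatiField_nonneg_of_le {A B C α x : ℝ} (hA : |A| ≤ α) (hB : 1 / 2 ≤ B)
    (hx : 2 * (α + |C| + 1) ≤ x) : 0 ≤ riccatiField A B C x := by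
  have hα : 0 ≤ α := (abs_nonneg A).trans hA
  have hx1 : 1 ≤ x := by linarith [abs_nonneg C]
  have hAx : -(α * x) ≤ A * x := by nlinarith [neg_abs_le A]
  have hBx : x * (α + |C| + 1) ≤ B * x ^ 2 := by nlinarith
  unfold riccatiField
  nlinarith [neg_abs_le C, abs_nonneg C]

theorem gronwallBound_zero_le_mul {K ε x T : ℝ} (hK : 0 ≤ K) (hε : 0 ≤ ε) (hx : x ≤ T) :
    gronwallBound 0 K ε x ≤ ε * gronwallBound 0 K 1 T := calc
  gronwallBound 0 K ε x ≤ gronwallBound 0 K ε T := gronwallBound_mono le_rfl hε hK hx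
  _ = ε * gronwallBound 0 K 1 T := by unfold gronwallBound; split_ifs <;> ring

namespace SolvesRiccati

variable {A B C T c : ℝ} {η : ℝ → ℝ}

theorem nonneg (h : SolvesRiccati A B C T c η) (hC : C ≤ 0) (hc : 0 ≤ c) :
    ∀ t ∈ Icc 0 T, 0 ≤ η t := by
  obtain ⟨M, hM⟩ := isCompact_Icc.exists_bound_of_continuousOn
    fun t ht => (h.1 t ht).continuousWithinAt
  have key := image_nonpos_of_neg_mul_le_deriv (g := fun t => -η t) (L := |A| + |B| * M)
    (fun t ht => (h.1 t ht).neg) (by simp [h.2, hc]) fun t ht hpos => by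
      have hy : |η t| = -η t := abs_of_neg (neg_pos.1 hpos)
      have hyM : -η t ≤ M := hy ▸ hM t (Ioc_subset_Icc_self ht)
      have hAy : A * η t ≤ |A| * -η t := hy ▸ abs_mul A (η t) ▸ le_abs_self _
      have hBy : B * η t ^ 2 ≤ |B| * M * -η t := calc
        B * η t ^ 2 ≤ |B| * (-η t * -η t) := by nlinarith [le_abs_self B]
        _ ≤ |B| * (M * -η t) := by gcongr
        _ = |B| * M * -η t := by ring
      linarith
  intro t ht
  linarith [key t ht]

theorem le_of_riccatiField_nonneg (h : SolvesRiccati A B C T c η) {K : ℝ} (hcK : c ≤ K)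
    (hK : ∀ x, K ≤ x → 0 ≤ riccatiField A B C x) : ∀ t ∈ Icc 0 T, η t ≤ K := by
  have key := image_nonpos_of_neg_mul_le_deriv (g := fun t => η t - K) (L := 0)
    (fun t ht => (h.1 t ht).sub_const K) (by simp [h.2, hcK]) fun t _ hpos => by
      simpa [riccatiField] using hK (η t) (by linarith)
  intro t ht
  linarith [key t ht]

theorem mem_Icc (h : SolvesRiccati A B C T c η) (hC : C ≤ 0) (hc : 0 ≤ c) {K : ℝ} (hcK : c ≤ K)
    (hK : ∀ x, K ≤ x → 0 ≤ riccatiField A B C x) : ∀ t ∈ Icc 0 T, η t ∈ Icc 0 K :=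
  fun t ht => ⟨h.nonneg hC hc t ht, h.le_of_riccatiField_nonneg hcK hK t ht⟩

theorem mem_Icc_of_half_le (h : SolvesRiccati A B C T c η) (hC : C ≤ 0) (hc : 0 ≤ c) {α : ℝ}
    (hA : |A| ≤ α) (hB : 1 / 2 ≤ B) : ∀ t ∈ Icc 0 T, η t ∈ Icc 0 (2 * (α + |C| + 1) + c) := by
  have hα : 0 ≤ α := (abs_nonneg A).trans hA
  exact h.mem_Icc hC hc (by linarith [abs_nonneg C]) fun x hx =>
    riccatiField_nonneg_of_le hA hB (by linarith)

theorem hasDerivWithinAt_Ici_comp_const_sub (h : SolvesRiccati A B C T c η) :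
    ∀ s ∈ Ico 0 T, HasDerivWithinAt (fun u => η (T - u)) (-riccatiField A B C (η (T - s)))
      (Ici s) s :=
  fun _ hs => ((h.1 _ (mapsTo_const_sub_Icc T (Ico_subset_Icc_self hs))).comp_const_sub_Icc
    ).mono_of_mem_nhdsWithin (Icc_mem_nhdsGE_of_mem hs)

theorem continuousOn_comp_const_sub (h : SolvesRiccati A B C T c η) :
    ContinuousOn (fun s => η (T - s)) (Icc 0 T) :=
  fun _ hs => (h.1 _ (mapsTo_const_sub_Icc T hs)).comp_const_sub_Icc.continuousWithinAt

theorem abs_sub_le_mul_gronwallBound {A' B' M ρ : ℝ} {η' : ℝ → ℝ}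
    (h : SolvesRiccati A B C T c η) (h' : SolvesRiccati A' B' C T c η')
    (hη : ∀ t ∈ Icc 0 T, η t ∈ Icc 0 M)
    (hη' : ∀ t ∈ Icc 0 T, η' t ∈ Icc 0 M) (hρ : |A - A'| * M + |B - B'| * M ^ 2 ≤ ρ) :
    ∀ t ∈ Icc 0 T, |η' t - η t| ≤ ρ * gronwallBound 0 (|A| + 2 * |B| * M) 1 T := by
  have key := dist_le_of_approx_trajectories_ODE_of_mem (v := fun _ => -riccatiField A B C)
    (s := fun _ => Icc 0 M) (δ := 0) (εf := 0) (εg := ρ)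
    (fun _ _ => (lipschitzOnWith_riccatiField A B C M).neg)
    h.continuousOn_comp_const_sub h.hasDerivWithinAt_Ici_comp_const_sub
    (fun _ _ => by simp) (fun s hs => hη _ (mapsTo_const_sub_Icc T (Ico_subset_Icc_self hs)))
    h'.continuousOn_comp_const_sub h'.hasDerivWithinAt_Ici_comp_const_sub
    (fun s hs => by
      rw [Real.dist_eq, Pi.neg_apply, neg_sub_neg]
      exact (abs_riccatiField_sub_le
        (hη' _ (mapsTo_const_sub_Icc T (Ico_subset_Icc_self hs)))).trans hρ)
    (fun s hs => hη' _ (mapsTo_const_sub_Icc T (Ico_subset_Icc_self hs)))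
    (by simp [h.2, h'.2])
  intro t ht
  have hM : 0 ≤ M := (hη t ht).1.trans (hη t ht).2
  have := key (T - t) (mapsTo_const_sub_Icc T ht)
  rw [sub_sub_cancel, zero_add, sub_zero, Real.coe_toNNReal _ (by positivity), dist_comm,
    Real.dist_eq] at this
  have hρ0 : 0 ≤ ρ := (by positivity : 0 ≤ |A - A'| * M + |B - B'| * M ^ 2).trans hρ
  exact this.trans (gronwallBound_zero_le_mul (by positivity) hρ0
    (by linarith [ht.1]))

end SolvesRiccati

theorem exists_solvesRiccati {A B C T c K : ℝ} (hT : 0 ≤ T) (hC : C ≤ 0) (hc : 0 ≤ c)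
    (hcK : c ≤ K) (hK : ∀ x, K ≤ x → 0 ≤ riccatiField A B C x) :
    ∃ η, SolvesRiccati A B C T c η := by
  have hK0 : 0 ≤ K := hc.trans hcK
  -- The clamped field is globally Lipschitz and bounded, and agrees with the Riccati field on
  -- `[0, K]`, which it leaves invariant.
  set v : ℝ → ℝ := IccExtend hK0 (fun x : Icc 0 K => riccatiField A B C x) with hv
  have hvLip := (lipschitzOnWith_riccatiField A B C K).to_restrict.comp
    (LipschitzWith.projIcc hK0)
  obtain ⟨M, hM⟩ := isCompact_Icc.exists_bound_of_continuousOn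
    (f := riccatiField A B C) (s := Icc 0 K) (by unfold riccatiField; fun_prop)
  have hvM : ∀ x, ‖v x‖ ≤ M.toNNReal := fun x =>
    (hM _ (projIcc 0 K hK0 x).2).trans (le_coe_toNNReal M)
  have hPL : IsPicardLindelof (fun _ => v) (tmin := 0) (tmax := T) ⟨T, hT, le_rfl⟩ c
      (M.toNNReal * T.toNNReal) 0 M.toNNReal _ :=
    .of_time_independent (fun x _ => hvM x) hvLip.lipschitzOnWith (by simp [hT])
  obtain ⟨η, hηT, hη⟩ := hPL.exists_eq_forall_mem_Icc_hasDerivWithinAt₀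
  have hnonneg := image_nonpos_of_neg_mul_le_deriv (g := fun t => -η t) (L := 0)
    (fun t ht => (hη t ht).neg) (by simp [hηT, hc]) fun t _ hpos => by
      simpa [hv, IccExtend_of_le_left hK0 _ (neg_pos.1 hpos).le, riccatiField] using hC
  have hle := image_nonpos_of_neg_mul_le_deriv (g := fun t => η t - K) (L := 0)
    (fun t ht => (hη t ht).sub_const K) (by simp [hηT, hcK]) fun t _ hpos => by
      simpa [hv, IccExtend_of_right_le hK0 _ (sub_pos.1 hpos).le] using hK K le_rfl
  refine ⟨η, fun t ht => ?_, hηT⟩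
  have hηK : η t ∈ Icc 0 K := ⟨by linarith [hnonneg t ht], by linarith [hle t ht]⟩
  simpa [hv, IccExtend_of_mem hK0 _ hηK, riccatiField] using hη t ht

theorem exists_solvesRiccati_of_half_le {A B C T c : ℝ} (hT : 0 ≤ T) (hC : C ≤ 0) (hc : 0 ≤ c)
    (hB : 1 / 2 ≤ B) : ∃ η, SolvesRiccati A B C T c η :=
  exists_solvesRiccati hT hC hc (K := 2 * (|A| + |C| + 1) + c)
    (le_add_of_nonneg_left (by positivity)) fun _ hx =>
      riccatiField_nonneg_of_le le_rfl hB ((le_add_of_nonneg_right hc).trans hx)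

theorem exists_forall_abs_sub_lt_of_abs_sub_le_div {α : Type*} {F G : ℕ → α → ℝ} {s : Set α}
    {κ : ℝ} {N₁ : ℕ} (h : ∀ N : ℕ, N₁ ≤ N → ∀ t ∈ s, |F N t - G N t| ≤ κ / N) :
    ∀ δ : ℝ, 0 < δ → ∃ N₀ : ℕ, ∀ N : ℕ, N₀ ≤ N → ∀ t ∈ s, |F N t - G N t| < δ := by
  intro δ hδ
  obtain ⟨N₂, hN₂⟩ := eventually_atTop.1
    ((tendsto_const_div_atTop_nhds_zero_nat κ).eventually (gt_mem_nhds hδ))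
  exact ⟨max N₁ N₂, fun N hN t ht =>
    (h N (le_of_max_le_left hN) t ht).trans_lt (hN₂ N (le_of_max_le_right hN))⟩

theorem openLoop_coefficient_bounds {a q K n : ℝ} (hq : 0 ≤ q) (hn : 2 ≤ n) :
    |2 * (a + q - q / n)| ≤ |2 * (a + q)| + 2 * q ∧ 1 / 2 ≤ 1 - 1 / n ∧
      |2 * (a + q) - 2 * (a + q - q / n)| * K + |1 - (1 - 1 / n)| * K ^ 2 ≤
        (2 * q * K + K ^ 2) / n := by
  have hn0 : 0 < n := by linarith
  have hqn : 0 ≤ q / n := div_nonneg hq hn0.le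
  refine ⟨?_, ?_, le_of_eq ?_⟩
  · calc |2 * (a + q - q / n)| = |2 * (a + q) - 2 * (q / n)| := by ring_nf
      _ ≤ |2 * (a + q)| + |2 * (q / n)| := abs_sub _ _
      _ ≤ |2 * (a + q)| + 2 * q := by
        rw [abs_of_nonneg (by positivity : (0 : ℝ) ≤ 2 * (q / n))]
        linarith [div_le_self hq (by linarith : (1 : ℝ) ≤ n)]
  · linarith [one_div_le_one_div_of_le (by norm_num) hn]
  · rw [show 2 * (a + q) - 2 * (a + q - q / n) = 2 * (q / n) by ring,
      show (1 : ℝ) - (1 - 1 / n) = 1 / n by ring, abs_of_nonneg (by positivity),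
      abs_of_nonneg (by positivity)]
    ring

theorem closedLoop_coefficient_bounds {q K n : ℝ} (hq : 0 ≤ q) (hK : 0 ≤ K) (hn : 2 ≤ n) :
    1 / 2 ≤ 1 - 1 / n ^ 2 ∧ |1 - (1 - 1 / n ^ 2)| * K ^ 2 ≤ (2 * q * K + K ^ 2) / n := by
  have hn0 : 0 < n := by linarith
  have hnn : n ≤ n ^ 2 := by nlinarith
  refine ⟨by linarith [one_div_le_one_div_of_le (by norm_num) (by nlinarith : (2 : ℝ) ≤ n ^ 2)], ?_⟩
  calc |1 - (1 - 1 / n ^ 2)| * K ^ 2 = K ^ 2 / n ^ 2 := by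
        rw [show (1 : ℝ) - (1 - 1 / n ^ 2) = 1 / n ^ 2 by ring, abs_of_nonneg (by positivity)]
        ring
    _ ≤ K ^ 2 / n := div_le_div_of_nonneg_left (sq_nonneg K) hn0 hnn
    _ ≤ (2 * q * K + K ^ 2) / n := by
        gcongr
        exact le_add_of_nonneg_left (by positivity)

/-- As `N → ∞`, the open-loop and closed-loop Riccati solutions of the
Carmona–Fouque–Sun systemic-risk model both converge, uniformly on `[0,T]`,
to the unique solution of the limiting (mean field game) Riccati equation
`η'(t) = 2(a + q)·η(t) + η(t)² + q² − ε`, `η(T) = c`; in particular the two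
finite-player solutions become uniformly close to each other. -/
theorem riccati_open_and_closed_loop_converge_to_mfg
    (T : ℝ) (hT : 0 < T) (a q ε c : ℝ)
    (hq : 0 ≤ q) (hε : q ^ 2 ≤ ε) (hc : 0 ≤ c)
    (ηOL ηCL : ℕ → ℝ → ℝ)
    (hOL : ∀ N : ℕ, 1 ≤ N →
      SolvesRiccati (2 * (a + q - q / (N : ℝ))) (1 - 1 / (N : ℝ)) (q ^ 2 - ε) T c (ηOL N))
    (hCL : ∀ N : ℕ, 1 ≤ N →
      SolvesRiccati (2 * (a + q)) (1 - 1 / (N : ℝ) ^ 2) (q ^ 2 - ε) T c (ηCL N)) :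
    ∃ ηlim : ℝ → ℝ,
      SolvesRiccati (2 * (a + q)) 1 (q ^ 2 - ε) T c ηlim ∧
      (∀ η' : ℝ → ℝ, SolvesRiccati (2 * (a + q)) 1 (q ^ 2 - ε) T c η' →
        ∀ t ∈ Set.Icc (0 : ℝ) T, η' t = ηlim t) ∧
      (∀ δ : ℝ, 0 < δ → ∃ N₀ : ℕ, ∀ N : ℕ, N₀ ≤ N →
        ∀ t ∈ Set.Icc (0 : ℝ) T, |ηOL N t - ηlim t| < δ) ∧
      (∀ δ : ℝ, 0 < δ → ∃ N₀ : ℕ, ∀ N : ℕ, N₀ ≤ N →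
        ∀ t ∈ Set.Icc (0 : ℝ) T, |ηCL N t - ηlim t| < δ) ∧
      (∀ δ : ℝ, 0 < δ → ∃ N₀ : ℕ, ∀ N : ℕ, N₀ ≤ N →
        ∀ t ∈ Set.Icc (0 : ℝ) T, |ηOL N t - ηCL N t| < δ) := by
  have hC : q ^ 2 - ε ≤ 0 := by linarith
  set α := |2 * (a + q)| + 2 * q
  set K := 2 * (α + |q ^ 2 - ε| + 1) + c
  have hαA : |2 * (a + q)| ≤ α := by linarith
  have hK : 0 ≤ K := by linarith [abs_nonneg (2 * (a + q)), abs_nonneg (q ^ 2 - ε)]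
  obtain ⟨ηlim, hlim⟩ := exists_solvesRiccati_of_half_le (A := 2 * (a + q)) hT.le hC hc
    (by norm_num : (1 / 2 : ℝ) ≤ 1)
  have hlimK := hlim.mem_Icc_of_half_le hC hc hαA (by norm_num)
  set κ := (2 * q * K + K ^ 2) * gronwallBound 0 (|2 * (a + q)| + 2 * |1| * K) 1 T
  have hclose : ∀ {A B n : ℝ} {η : ℝ → ℝ}, SolvesRiccati A B (q ^ 2 - ε) T c η → |A| ≤ α →
      1 / 2 ≤ B → |2 * (a + q) - A| * K + |1 - B| * K ^ 2 ≤ (2 * q * K + K ^ 2) / n →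
      ∀ t ∈ Icc 0 T, |η t - ηlim t| ≤ κ / n := fun h hA hB hgap t ht =>
    (hlim.abs_sub_le_mul_gronwallBound h hlimK (h.mem_Icc_of_half_le hC hc hA hB) hgap t
      ht).trans_eq (by ring)
  have hOL' : ∀ N : ℕ, 2 ≤ N → ∀ t ∈ Icc 0 T, |ηOL N t - ηlim t| ≤ κ / N := fun N hN => by
    obtain ⟨hA, hB, hgap⟩ := openLoop_coefficient_bounds (a := a) (K := K) (n := N) hq
      (by exact_mod_cast hN)
    exact hclose (hOL N (by omega)) hA hB hgap
  have hCL' : ∀ N : ℕ, 2 ≤ N → ∀ t ∈ Icc 0 T, |ηCL N t - ηlim t| ≤ κ / N := fun N hN => by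
    obtain ⟨hB, hgap⟩ := closedLoop_coefficient_bounds (n := N) hq hK (by exact_mod_cast hN)
    exact hclose (hCL N (by omega)) hαA hB (by simpa using hgap)
  have hOLCL : ∀ N : ℕ, 2 ≤ N → ∀ t ∈ Icc 0 T, |ηOL N t - ηCL N t| ≤ 2 * κ / N :=
    fun N hN t ht => calc
      |ηOL N t - ηCL N t| ≤ |ηOL N t - ηlim t| + |ηCL N t - ηlim t| :=
        (abs_sub_le _ (ηlim t) _).trans_eq (by rw [abs_sub_comm (ηlim t)])
      _ ≤ κ / N + κ / N := add_le_add (hOL' N hN t ht) (hCL' N hN t ht)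
      _ = 2 * κ / N := by ring
  refine ⟨ηlim, hlim, fun η' h' t ht => ?_, exists_forall_abs_sub_lt_of_abs_sub_le_div hOL',
    exists_forall_abs_sub_lt_of_abs_sub_le_div hCL',
    exists_forall_abs_sub_lt_of_abs_sub_le_div hOLCL⟩
  have := hlim.abs_sub_le_mul_gronwallBound (ρ := 0) h' hlimK
    (h'.mem_Icc_of_half_le hC hc hαA (by norm_num)) (le_of_eq (by simp)) t ht
  rwa [zero_mul, abs_nonpos_iff, sub_eq_zero] at this
end

section
/- Let T > 0, let N ≥ 2 be an integer, and let a ∈ ℝ, q > 0, ε ≥ q², and c > 0. Let η^{OL,N} be the unique solution on [0,T] of η'(t) = 2(a + q − q/N)η(t) + (1 − 1/N)η(t)² + q² − ε with η(T) = c, and let η^{CL,N} be the unique solution of η'(t) = 2(a + q)η(t) + (1 − 1/N²)η(t)² + q² − ε with η(T) = c. Then η^{OL,N} ≠ η^{CL,N}: there exists t ∈ [0,T) with η^{OL,N}(t) ≠ η^{CL,N}(t). -/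
/-! Two solutions with the same terminal value that agree on `[0,T)` agree on `[0,T]`, so their
(one-sided) derivatives at `T` coincide; for the open- and closed-loop equations these are the
right-hand sides evaluated at `c`, which differ by `-(c/N)·(2q + (1 - 1/N)·c) < 0`. -/

open Set

namespace SolvesRiccati

variable {A B C A' B' C' T c : ℝ} {η η' : ℝ → ℝ}

theorem eqOn_Icc_of_eqOn_Ico (h : SolvesRiccati A B C T c η) (h' : SolvesRiccati A' B' C' T c η')
    (heq : EqOn η η' (Ico 0 T)) : EqOn η η' (Icc 0 T) := by
  intro t ht
  rcases ht.2.eq_or_lt with rfl | hlt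
  · rw [h.2, h'.2]
  · exact heq ⟨ht.1, hlt⟩

theorem rhs_eq_of_eqOn_Ico (hT : 0 < T) (h : SolvesRiccati A B C T c η)
    (h' : SolvesRiccati A' B' C' T c η') (heq : EqOn η η' (Ico 0 T)) :
    A * c + B * c ^ 2 + C = A' * c + B' * c ^ 2 + C' := by
  have hTmem : T ∈ Icc (0 : ℝ) T := right_mem_Icc.2 hT.le
  have hderiv : HasDerivWithinAt η' (A * c + B * c ^ 2 + C) (Icc 0 T) T := by
    simpa only [h.2] using
      (h.1 T hTmem).congr (h.eqOn_Icc_of_eqOn_Ico h' heq).symm (h'.2.trans h.2.symm)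
  simpa only [h'.2] using (uniqueDiffOn_Icc hT T hTmem).eq_deriv _ hderiv (h'.1 T hTmem)

end SolvesRiccati

theorem openLoop_rhs_ne_closedLoop_rhs {N a q c C : ℝ} (hN : 1 ≤ N) (hq : 0 < q) (hc : 0 < c) :
    2 * (a + q - q / N) * c + (1 - 1 / N) * c ^ 2 + C ≠
      2 * (a + q) * c + (1 - 1 / N ^ 2) * c ^ 2 + C := by
  have hN0 : N ≠ 0 := by positivity
  have hdiff : (2 * (a + q - q / N) * c + (1 - 1 / N) * c ^ 2 + C) -
      (2 * (a + q) * c + (1 - 1 / N ^ 2) * c ^ 2 + C) = -(c / N) * (2 * q + (1 - 1 / N) * c) := by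
    field_simp
    ring
  have hpos : 0 < c / N * (2 * q + (1 - 1 / N) * c) := by
    have : 0 ≤ 1 - 1 / N := sub_nonneg.2 (div_le_one_of_le₀ hN (by positivity))
    positivity
  intro h
  linarith

theorem openLoop_ne_closedLoop_riccati_general
    (T : ℝ) (hT : 0 < T) (N : ℕ) (hN : 2 ≤ N) (a q ε c : ℝ)
    (hq : 0 < q) (hc : 0 < c)
    (ηOL ηCL : ℝ → ℝ)
    (hOL : SolvesRiccati (2 * (a + q - q / (N : ℝ))) (1 - 1 / (N : ℝ)) (q ^ 2 - ε) T c ηOL)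
    (hCL : SolvesRiccati (2 * (a + q)) (1 - 1 / (N : ℝ) ^ 2) (q ^ 2 - ε) T c ηCL) :
    ∃ t ∈ Set.Ico (0 : ℝ) T, ηOL t ≠ ηCL t := by
  by_contra! hagree
  have hN1 : (1 : ℝ) ≤ N := by exact_mod_cast one_le_two.trans hN
  exact openLoop_rhs_ne_closedLoop_rhs hN1 hq hc (hOL.rhs_eq_of_eqOn_Ico hT hCL hagree)

/-- For any finite number `N ≥ 2` of banks (with `q > 0`, `ε ≥ q²`, `c > 0`),
the open-loop and closed-loop Riccati solutions of the Carmona–Fouque–Sun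
systemic-risk model are distinct functions on `[0,T)`. -/
theorem openLoop_ne_closedLoop_riccati
    (T : ℝ) (hT : 0 < T) (N : ℕ) (hN : 2 ≤ N) (a q ε c : ℝ)
    (hq : 0 < q) (hε : q ^ 2 ≤ ε) (hc : 0 < c)
    (ηOL ηCL : ℝ → ℝ)
    (hOL : SolvesRiccati (2 * (a + q - q / (N : ℝ))) (1 - 1 / (N : ℝ)) (q ^ 2 - ε) T c ηOL)
    (hCL : SolvesRiccati (2 * (a + q)) (1 - 1 / (N : ℝ) ^ 2) (q ^ 2 - ε) T c ηCL) :
    ∃ t ∈ Set.Ico (0 : ℝ) T, ηOL t ≠ ηCL t :=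
  openLoop_ne_closedLoop_riccati_general T hT N hN a q ε c hq hc ηOL ηCL hOL hCL
end
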